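/- Let q be a prime power and let k be a field containing the finite field F_q. A homogeneous polynomial f ∈ k[X_0, X_1, …, X_n] satisfies f(a) = 0 for every a ∈ F_q^{n+1} ∖ {0} if and only if f belongs to the ideal Γ*_q(k) generated by the Fermat polynomials X_i^q X_j − X_i X_j^q for 0 ≤ i < j ≤ n. Consequently, the vanishing ideal of P^n(F_q), i.e., the ideal of k[X_0, …, X_n] generated by all homogeneous polynomials vanishing at every point of P^n(F_q), equals Γ*_q(k). -/

import Mathlib

open MvPolynomial Finset Finsupp

/-!
Modulo the Fermat ideal, `X_i^q X_j ≡ X_i X_j^q` moves `q - 1` from the exponent of `X_i` to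
that of a later variable `X_j`, so every monomial is congruent to a reduced one: only the last
variable occurring in it may have exponent `≥ q`. At points with coordinates in `F_q` a monomial
agrees with the one whose nonzero exponents are reduced modulo `q - 1` into `1, …, q - 1`, and
among reduced monomials of a fixed degree this reduction is injective. A homogeneous `f` vanishing
on `F_q^{n+1} ∖ 0` also vanishes at `0`, so the exponent reduction of its reduced form vanishes on
all of `F_q^{n+1}` while having all exponents `< q`; by the combinatorial Nullstellensatz it is
zero, hence so is the reduced form of `f`, i.e. `f` lies in the Fermat ideal.
-/

def foldExp (q e : ℕ) : ℕ := if e = 0 then 0 else (e - 1) % (q - 1) + 1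

section

variable {q e : ℕ}

@[simp] theorem foldExp_eq_zero_iff : foldExp q e = 0 ↔ e = 0 := by
  unfold foldExp; split_ifs <;> simp [*]

theorem foldExp_lt (hq : 2 ≤ q) (e : ℕ) : foldExp q e < q := by
  unfold foldExp; split_ifs
  · omega
  · have := Nat.mod_lt (e - 1) (show 0 < q - 1 by omega); omega

theorem foldExp_of_lt (he : e < q) : foldExp q e = e := by
  unfold foldExp; split_ifs
  · omega
  · rw [Nat.mod_eq_of_lt (by omega)]; omega

theorem pow_foldExp {M : Type*} [Monoid M] {x : M} (hx : x ^ q = x) (e : ℕ) :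
    x ^ foldExp q e = x ^ e := by
  have hstep : ∀ a t : ℕ, x ^ (a + 1 + (q - 1) * t) = x ^ (a + 1) := by
    intro a t
    induction t with
    | zero => simp
    | succ t ih =>
      rcases Nat.eq_zero_or_pos q with rfl | hq
      · simp
      · rw [← ih, show a + 1 + (q - 1) * (t + 1) = a + (q - 1) * t + q by
          rw [Nat.mul_succ]; omega, pow_add, hx, ← pow_succ]
        ring_nf
  rcases e with _ | e
  · simp [foldExp]
  · simp only [foldExp, Nat.add_one_ne_zero, if_false, Nat.add_sub_cancel]
    conv_rhs => rw [← Nat.mod_add_div e (q - 1), add_right_comm, hstep]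

end

theorem Subfield.coe_pow_card {k : Type*} [Field k] (F : Subfield k) [Fintype F] (a : F) :
    (a : k) ^ Fintype.card F = a := by
  exact_mod_cast congrArg ((↑) : F → k) (FiniteField.pow_card a)

namespace Finsupp

variable {σ : Type*}

theorem eq_of_degree_eq_of_forall_ne {m₁ m₂ : σ →₀ ℕ} (i : σ)
    (hdeg : m₁.degree = m₂.degree) (h : ∀ j ≠ i, m₁ j = m₂ j) : m₁ = m₂ := by
  have herase : m₁.erase i = m₂.erase i := by
    ext j
    rcases eq_or_ne j i with rfl | hj
    · simp
    · simp [erase_ne hj, h j hj]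
  rw [← single_add_erase i m₁, ← single_add_erase i m₂, map_add, map_add, degree_single,
    degree_single, herase, add_left_inj] at hdeg
  rw [← single_add_erase i m₁, ← single_add_erase i m₂, herase, hdeg]

noncomputable def foldExps (q : ℕ) (m : σ →₀ ℕ) : σ →₀ ℕ :=
  mapRange (foldExp q) (by simp) m

@[simp] theorem foldExps_apply (q : ℕ) (m : σ →₀ ℕ) (i : σ) :
    foldExps q m i = foldExp q (m i) :=
  mapRange_apply ..

end Finsupp

namespace MvPolynomial

section

variable {σ R : Type*} [CommRing R]

theorem IsHomogeneous.eval_zero_eq_zero {f : MvPolynomial σ R} {d : ℕ}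
    (hf : f.IsHomogeneous d) {x : σ → R} (hx : eval x f = 0) : eval 0 f = 0 := by
  rw [eval_zero, constantCoeff_eq]
  rcases eq_or_ne d 0 with rfl | hd
  · rwa [totalDegree_eq_zero_iff_eq_C.1 ((totalDegree_zero_iff_isHomogeneous σ).2 hf),
      eval_C] at hx
  · exact hf.coeff_eq_zero (by simpa using hd.symm)

theorem support_sum_monomial_subset {ι : Type*} [DecidableEq σ] (s : Finset ι)
    (φ : ι → σ →₀ ℕ) (c : ι → R) : (∑ i ∈ s, monomial (φ i) (c i)).support ⊆ s.image φ := by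
  intro m hm
  obtain ⟨i, hi, hm⟩ := mem_biUnion.1 (support_sum hm)
  exact mem_image.2 ⟨i, hi, (mem_singleton.1 (support_monomial_subset hm)).symm⟩

theorem isHomogeneous_fermat (q : ℕ) (i j : σ) :
    (X i ^ q * X j - X i * X j ^ q : MvPolynomial σ R).IsHomogeneous (q + 1) :=
  ((isHomogeneous_X_pow i q).mul (isHomogeneous_X R j)).sub
    (by simpa [add_comm] using (isHomogeneous_X R i).mul (isHomogeneous_X_pow j q))

theorem eval_monomial_foldExps {q : ℕ} {x : σ → R} (hx : ∀ i, x i ^ q = x i)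
    (m : σ →₀ ℕ) (c : R) : eval x (monomial (foldExps q m) c) = eval x (monomial m c) := by
  rw [eval_monomial, eval_monomial, foldExps, prod_mapRange_index (by simp)]
  simp only [pow_foldExp (hx _)]

theorem eq_zero_of_degreeOf_lt_of_eval_subfield_eq_zero {k : Type*} [Finite σ] [Field k]
    (F : Subfield k) [Fintype F] {g : MvPolynomial σ k}
    (hdeg : ∀ i, g.degreeOf i < Fintype.card F)
    (heval : ∀ a : σ → F, eval (fun i => (a i : k)) g = 0) : g = 0 := by
  refine eq_zero_of_eval_zero_at_prod_finset g
    (fun _ => univ.map (Function.Embedding.subtype (· ∈ F))) (by simpa using hdeg) fun x hx => ?_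
  simpa using heval fun i => ⟨x i, by simpa using hx i⟩

end

section

variable {σ R : Type*} [LinearOrder σ] [CommRing R] {q : ℕ}

variable (σ R q) in
noncomputable def fermatIdeal : Ideal (MvPolynomial σ R) :=
  Ideal.span {p | ∃ i j : σ, i < j ∧ p = X i ^ q * X j - X i * X j ^ q}

theorem eval_eq_zero_of_mem_fermatIdeal {x : σ → R} (hx : ∀ i, x i ^ q = x i)
    {f : MvPolynomial σ R} (hf : f ∈ fermatIdeal σ R q) : eval x f = 0 := by
  refine (Ideal.span_le (I := RingHom.ker (eval x))).2 ?_ hf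
  rintro _ ⟨i, j, -, rfl⟩
  simp [hx]

theorem monomial_sub_monomial_mem_fermatIdeal {i j : σ} (hij : i < j) (w : σ →₀ ℕ) (c : R) :
    monomial (single i q + single j 1 + w) c - monomial (single i 1 + single j q + w) c ∈
      fermatIdeal σ R q := by
  have hX : ∀ a b : ℕ,
      (X i ^ a * X j ^ b : MvPolynomial σ R) = monomial (single i a + single j b) 1 := by
    simp [X_pow_eq_monomial, monomial_mul]
  rw [← one_mul c, ← monomial_mul, ← monomial_mul, ← hX, ← hX, ← sub_mul, pow_one, pow_one]
  exact Ideal.mul_mem_right _ _ (Ideal.subset_span ⟨i, j, hij, rfl⟩)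

variable (q) in
def IsFermatReduced (m : σ →₀ ℕ) : Prop :=
  ∀ i j, i < j → m j ≠ 0 → m i < q

theorem exists_isFermatReduced_sub_mem_fermatIdeal [WellFoundedGT σ] (hq : 2 ≤ q)
    (m : σ →₀ ℕ) : ∃ m', IsFermatReduced q m' ∧ m'.degree = m.degree ∧
      ∀ c : R, monomial m c - monomial m' c ∈ fermatIdeal σ R q := by
  induction hl : toLex m using WellFoundedLT.induction generalizing m with
  | ind l ih =>
  subst hl
  by_cases hm : IsFermatReduced q m
  · exact ⟨m, hm, rfl, fun c => by simp⟩
  obtain ⟨i, j, hij, hj, hi⟩ : ∃ i j, i < j ∧ m j ≠ 0 ∧ q ≤ m i := by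
    simpa [IsFermatReduced] using hm
  obtain ⟨w, rfl⟩ : ∃ w, m = single i q + single j 1 + w := by
    refine le_iff_exists_add.1 (Finsupp.le_def.2 fun x => ?_)
    rcases eq_or_ne i x with rfl | hix
    · simpa [hij.ne] using hi
    · rcases eq_or_ne j x with rfl | hjx
      · simpa [hix] using Nat.one_le_iff_ne_zero.2 hj
      · simp [hix, hjx]
  have hlt : toLex (single i 1 + single j q + w) < toLex (single i q + single j 1 + w) := by
    refine Finsupp.Lex.lt_iff.2 ⟨i, fun y hy => ?_, ?_⟩
    · simp [hy.ne', (hy.trans hij).ne']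
    · simp [hij.ne]
      omega
  obtain ⟨m', hred, hdeg, hmem⟩ := ih _ hlt _ rfl
  refine ⟨m', hred, by simp [hdeg, add_comm], fun c => ?_⟩
  rw [← sub_add_sub_cancel _ (monomial (single i 1 + single j q + w) c)]
  exact add_mem (monomial_sub_monomial_mem_fermatIdeal hij w c) (hmem c)

theorem foldExps_injOn_isFermatReduced (d : ℕ) :
    Set.InjOn (foldExps q) {m : σ →₀ ℕ | IsFermatReduced q m ∧ m.degree = d} := by
  rintro m₁ ⟨h₁, rfl⟩ m₂ ⟨h₂, hdeg⟩ h
  have hfold : ∀ i, foldExp q (m₁ i) = foldExp q (m₂ i) := by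
    simpa using DFunLike.congr_fun h
  have hzero : ∀ i, m₁ i = 0 ↔ m₂ i = 0 := fun i => by
    rw [← foldExp_eq_zero_iff (q := q), hfold i, foldExp_eq_zero_iff]
  rcases m₁.support.eq_empty_or_nonempty with hempty | hne
  · rw [Finsupp.support_eq_empty.1 hempty, map_zero, degree_eq_zero_iff] at hdeg
    rw [Finsupp.support_eq_empty.1 hempty, hdeg]
  refine eq_of_degree_eq_of_forall_ne (m₁.support.max' hne) hdeg.symm fun i hi => ?_
  by_cases hi0 : m₁ i = 0
  · rw [hi0, ((hzero i).1 hi0)]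
  have hlt : i < m₁.support.max' hne :=
    (le_max' _ _ (Finsupp.mem_support_iff.2 hi0)).lt_of_ne hi
  have hmax : m₁ (m₁.support.max' hne) ≠ 0 := Finsupp.mem_support_iff.1 (max'_mem _ _)
  simpa [foldExp_of_lt (h₁ _ _ hlt hmax),
    foldExp_of_lt (h₂ _ _ hlt ((hzero _).not.1 hmax))] using hfold i

end

section

variable {σ k : Type*} [LinearOrder σ] [Finite σ] [Field k] (F : Subfield k) [Fintype F]

theorem eq_zero_of_isFermatReduced {g : MvPolynomial σ k} {d : ℕ} (hg : g.IsHomogeneous d)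
    (hred : ∀ m ∈ g.support, IsFermatReduced (Fintype.card F) m)
    (heval : ∀ a : σ → F, eval (fun i => (a i : k)) g = 0) : g = 0 := by
  set q := Fintype.card F
  have hq : 2 ≤ q := Fintype.one_lt_card
  set G := ∑ m ∈ g.support, monomial (foldExps q m) (coeff m g)
  have hG : G = 0 := by
    refine eq_zero_of_degreeOf_lt_of_eval_subfield_eq_zero F
      (fun i => (degreeOf_lt_iff (by omega)).2 fun m hm => ?_) fun a => ?_
    · obtain ⟨m, -, rfl⟩ := mem_image.1 (support_sum_monomial_subset _ _ _ hm)
      simpa using foldExp_lt hq (m i)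
    · rw [← heval a]
      conv_rhs => rw [g.as_sum]
      simp only [G, map_sum]
      exact sum_congr rfl fun m _ => eval_monomial_foldExps (fun i => F.coe_pow_card (a i)) m _
  ext m
  by_cases hm : m ∈ g.support
  · have hcoeff : coeff (foldExps q m) G = coeff m g := by
      rw [coeff_sum, sum_eq_single_of_mem m hm]
      · simp
      · intro m' hm' hne
        rw [coeff_monomial, if_neg]
        exact fun h => hne (foldExps_injOn_isFermatReduced d
          ⟨hred m' hm', (hg.degree_eq_sum_deg_support hm').symm⟩
          ⟨hred m hm, (hg.degree_eq_sum_deg_support hm).symm⟩ h)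
    rw [← hcoeff, hG, coeff_zero, coeff_zero]
  · simpa using hm

theorem mem_fermatIdeal_of_isHomogeneous [Nonempty σ] {f : MvPolynomial σ k} {d : ℕ}
    (hf : f.IsHomogeneous d) (hv : ∀ a : σ → F, a ≠ 0 → eval (fun i => (a i : k)) f = 0) :
    f ∈ fermatIdeal σ k (Fintype.card F) := by
  choose N hNred hNdeg hNmem using
    exists_isFermatReduced_sub_mem_fermatIdeal (σ := σ) (R := k) (Fintype.one_lt_card (α := F))
  set g := ∑ m ∈ f.support, monomial (N m) (coeff m f)
  have hfg : f - g ∈ fermatIdeal σ k (Fintype.card F) := by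
    have hsum : f - g =
        ∑ m ∈ f.support, (monomial m (coeff m f) - monomial (N m) (coeff m f)) := by
      rw [sum_sub_distrib, ← f.as_sum]
    exact hsum ▸ sum_mem fun m _ => hNmem m _
  have hf0 : ∀ a : σ → F, eval (fun i => (a i : k)) f = 0 := by
    intro a
    rcases eq_or_ne a 0 with rfl | ha
    · simpa using hf.eval_zero_eq_zero (hv 1 one_ne_zero)
    · exact hv a ha
  have hg : g = 0 := by
    refine eq_zero_of_isFermatReduced F (d := d) (IsHomogeneous.sum _ _ _ fun m hm =>
      isHomogeneous_monomial _ ((hNdeg m).trans (hf.degree_eq_sum_deg_support hm).symm))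
      (fun m hm => ?_) fun a => ?_
    · obtain ⟨m, -, rfl⟩ := mem_image.1 (support_sum_monomial_subset _ _ _ hm)
      exact hNred m
    · rw [← sub_sub_cancel f g, map_sub, hf0,
        eval_eq_zero_of_mem_fermatIdeal (fun i => F.coe_pow_card (a i)) hfg, sub_zero]
  simpa [hg] using hfg

end

end MvPolynomial

/-- A homogeneous polynomial `f ∈ k[X_0,…,X_n]` vanishes at every point of
`F_q^{n+1} \ {0}` if and only if it lies in the ideal `Γ*_q(k)` generated by the Fermat
polynomials `X_i^q X_j - X_i X_j^q` for `i < j`. Consequently, the vanishing ideal of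
`P^n(F_q)`, i.e. the ideal generated by all homogeneous polynomials vanishing on
`P^n(F_q)`, equals `Γ*_q(k)`. -/
theorem vanishingIdeal_projectiveSpace_eq_fermatIdeal
    (q n : ℕ) (hq : IsPrimePow q) (k : Type*) [Field k]
    (Fq : Subfield k) (hcard : Nat.card Fq = q) :
    (∀ f : MvPolynomial (Fin (n + 1)) k, (∃ d, f.IsHomogeneous d) →
      ((∀ a : Fin (n + 1) → Fq, a ≠ 0 →
          MvPolynomial.eval (fun i => (a i : k)) f = 0) ↔
        f ∈ Ideal.span {p : MvPolynomial (Fin (n + 1)) k |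
          ∃ i j : Fin (n + 1), i < j ∧ p = X i ^ q * X j - X i * X j ^ q})) ∧
    Ideal.span {f : MvPolynomial (Fin (n + 1)) k |
        (∃ d, f.IsHomogeneous d) ∧
        ∀ a : Fin (n + 1) → Fq, a ≠ 0 →
          MvPolynomial.eval (fun i => (a i : k)) f = 0} =
      Ideal.span {p : MvPolynomial (Fin (n + 1)) k |
        ∃ i j : Fin (n + 1), i < j ∧ p = X i ^ q * X j - X i * X j ^ q} := by
  have : Fintype Fq := @Fintype.ofFinite _ (Nat.finite_of_card_ne_zero (hcard ▸ hq.ne_zero))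
  rw [Nat.card_eq_fintype_card] at hcard
  subst hcard
  have hiff : ∀ f : MvPolynomial (Fin (n + 1)) k, (∃ d, f.IsHomogeneous d) →
      ((∀ a : Fin (n + 1) → Fq, a ≠ 0 → eval (fun i => (a i : k)) f = 0) ↔
        f ∈ fermatIdeal (Fin (n + 1)) k (Fintype.card Fq)) := fun f ⟨d, hf⟩ =>
    ⟨mem_fermatIdeal_of_isHomogeneous Fq hf,
      fun h a _ => eval_eq_zero_of_mem_fermatIdeal (fun i => Fq.coe_pow_card (a i)) h⟩
  refine ⟨hiff, le_antisymm (Ideal.span_le.2 fun f hf => (hiff f hf.1).1 hf.2) ?_⟩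
  refine Ideal.span_mono ?_
  rintro _ ⟨i, j, hij, rfl⟩
  exact ⟨⟨_, isHomogeneous_fermat _ i j⟩,
    (hiff _ ⟨_, isHomogeneous_fermat _ i j⟩).2 (Ideal.subset_span ⟨i, j, hij, rfl⟩)⟩
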